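/- Let T be a nonspecial, well-pruned ω₁-tree. Then ◊_T⁻ holds if and only if ◊_T holds. -/

import Mathlib

open Set

/-- The first uncountable ordinal `ω₁`. -/
noncomputable def omega1 : Ordinal := Ordinal.omega 1

section TreeDefs

variable {T : Type*} [PartialOrder T]

/-- In a tree, the set of strict predecessors of any node is linearly ordered. -/
def PredsChain (T : Type*) [PartialOrder T] : Prop :=
  ∀ t : T, IsChain (· ≤ ·) {s : T | s < t}

/-- `ht` is *the* height function of the tree: it is strictly monotone on comparable pairs and
the heights of the strict predecessors of `t` are exactly the ordinals below `ht t`; together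
with `PredsChain` this says that the set `t↓` of strict predecessors of `t` is well-ordered
with order type `ht t`. -/
def IsHeightFun (ht : T → Ordinal) : Prop :=
  (∀ s t : T, s < t → ht s < ht t) ∧
  ∀ t : T, ∀ o : Ordinal, o < ht t → ∃ s : T, s < t ∧ ht s = o

/-- The tree has height `ω₁`: every node has height `< ω₁` and every countable ordinal is the
height of some node. -/
def HeightOmega1 (ht : T → Ordinal) : Prop :=
  (∀ t : T, ht t < omega1) ∧ ∀ o : Ordinal, o < omega1 → ∃ t : T, ht t = o

/-- All levels of the tree are countable. -/
def CountableLevels (ht : T → Ordinal) : Prop :=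
  ∀ o : Ordinal, {t : T | ht t = o}.Countable

/-- A tree of height `ω₁` is well-pruned if every node has successors in all later levels. -/
def WellPruned (ht : T → Ordinal) : Prop :=
  ∀ o o' : Ordinal, o < o' → o' < omega1 →
    ∀ s : T, ht s = o → ∃ t : T, s < t ∧ ht t = o'

/-- A special subset of a tree: a union of countably many antichains. -/
def IsSpecialSet (U : Set T) : Prop :=
  ∃ A : ℕ → Set T, (∀ n : ℕ, IsAntichain (· ≤ ·) (A n)) ∧ U ⊆ ⋃ n, A n

/-- Membership in the ideal `NS^T`: there is a regressive map on `B` all of whose fibers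
are special. -/
def InNS [OrderBot T] (B : Set T) : Prop :=
  ∃ f : T → T, (∀ t ∈ B, t ≠ ⊥ → f t < t) ∧
    ∀ t : T, IsSpecialSet {s : T | s ∈ B ∧ f s = t}

/-- The diamond principle `◊_T` for a tree `T`. -/
def DiamondTree (T : Type*) [PartialOrder T] [OrderBot T] : Prop :=
  ∃ D : T → Set T, (∀ t : T, D t ⊆ Set.Iio t) ∧
    ∀ X : Set T, ¬ InNS {t : T | X ∩ Set.Iio t = D t}

end TreeDefs

/-- Club subsets of `ω₁`: closed and unbounded in `ω₁`. -/
def IsClubIn (C : Set Ordinal) : Prop :=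
  C ⊆ Set.Iio omega1 ∧
  (∀ o : Ordinal, o < omega1 → ∃ b ∈ C, o < b) ∧
  ∀ o : Ordinal, o < omega1 → (C ∩ Set.Iio o).Nonempty →
    IsLUB (C ∩ Set.Iio o) o → o ∈ C

/-- Stationary subsets of `ω₁`: sets meeting every club. -/
def IsStationaryIn (S : Set Ordinal) : Prop :=
  ∀ C : Set Ordinal, IsClubIn C → (S ∩ C).Nonempty

/-- The diamond principle `◊(S)` for `S ⊆ ω₁`;  `◊` is `DiamondOn (Set.Iio omega1)`. -/
def DiamondOn (S : Set Ordinal) : Prop :=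
  ∃ D : Ordinal → Set Ordinal, (∀ o ∈ S, D o ⊆ Set.Iio o) ∧
    ∀ X : Set Ordinal, X ⊆ Set.Iio omega1 →
      IsStationaryIn {o ∈ S | X ∩ Set.Iio o = D o}

/-- The diamond principle `◊_T⁻`: each node guesses from a countable family of subsets
of `t↓`, and every `X ⊆ T` is guessed on a set not in `NS^T`. -/
def DiamondTreeMinus (T : Type*) [PartialOrder T] [OrderBot T] : Prop :=
  ∃ D : T → Set (Set T),
    (∀ t : T, (∀ A ∈ D t, A ⊆ Set.Iio t) ∧ (D t).Countable) ∧
    ∀ X : Set T, ¬ InNS {t : T | X ∩ Set.Iio t ∈ D t}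

/-!
`◊_T` gives `◊_T⁻` with singleton families. Conversely, enumerate each countable family `𝒟_t`
as `(e_t n)_n` and let the `n`-th candidate `◊_T`-sequence guess at `t` the set that `e_t n`
codes in coordinate `n`. If every candidate fails for some `X_n`, code the whole family into
one set `Y`: the nodes `s` lying above some `x ∈ X_n` with `ht s = ω·ht x + n`. At a node `t`
with `ω·ht t ≤ ht t` the set `Y ∩ t↓` determines every `X_n ∩ t↓`, so if `Y ∩ t↓ = e_t n`
then the `n`-th candidate guesses `X_n` at `t`. The other nodes form a set in `NS^T`: sending `t`
to its predecessor at height `ht t / ω` is regressive with countable fibers. Hence `Y` is guessed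
only on a countable union of sets in `NS^T`, contradicting `◊_T⁻`.
-/

open Ordinal

section Special

variable {T : Type*} [PartialOrder T]

theorem IsSpecialSet.mono {U V : Set T} (h : U ⊆ V) (hV : IsSpecialSet V) : IsSpecialSet U :=
  let ⟨A, hA, hVA⟩ := hV
  ⟨A, hA, h.trans hVA⟩

theorem isSpecialSet_iUnion {ι : Type*} [Countable ι] {U : ι → Set T}
    (h : ∀ i, IsSpecialSet (U i)) : IsSpecialSet (⋃ i, U i) := by
  choose A hA hU using h
  obtain ⟨g, hg⟩ := Countable.exists_injective_nat ι
  refine ⟨fun k => {x | ∃ i, g i = k.unpair.1 ∧ x ∈ A i k.unpair.2}, ?_, ?_⟩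
  · rintro k x ⟨i, hi, hx⟩ y ⟨i', hi', hy⟩ hxy
    obtain rfl := hg (hi.trans hi'.symm)
    exact hA i _ hx hy hxy
  · intro x hx
    obtain ⟨i, hxi⟩ := mem_iUnion.1 hx
    obtain ⟨m, hm⟩ := mem_iUnion.1 (hU i hxi)
    exact mem_iUnion.2 ⟨Nat.pair (g i) m, i, by simp, by simpa using hm⟩

theorem Set.Countable.isSpecialSet {U : Set T} (hU : U.Countable) : IsSpecialSet U := by
  have : Countable U := hU.to_subtype
  rw [← iUnion_of_singleton_coe U]
  exact isSpecialSet_iUnion fun x =>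
    ⟨fun _ => {x.1}, fun _ => subsingleton_singleton.isAntichain _,
      subset_iUnion (fun _ : ℕ => ({x.1} : Set T)) 0⟩

variable [OrderBot T]

theorem InNS.mono {B B' : Set T} (h : B' ⊆ B) (hB : InNS B) : InNS B' := by
  obtain ⟨f, hreg, hfib⟩ := hB
  refine ⟨f, fun t ht => hreg t (h ht), fun t => (hfib t).mono ?_⟩
  rintro s ⟨hs, rfl⟩
  exact ⟨h hs, rfl⟩

theorem inNS_iUnion {ι : Type*} [Countable ι] {B : ι → Set T} (h : ∀ i, InNS (B i)) :
    InNS (⋃ i, B i) := by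
  classical
  choose f hreg hfib using h
  let g : T → T := fun t => if h : ∃ i, t ∈ B i then f h.choose t else t
  refine ⟨g, fun t ht hne => ?_, fun u => (isSpecialSet_iUnion fun i => hfib i u).mono ?_⟩
  · have h := mem_iUnion.1 ht
    simp only [g, dif_pos h]
    exact hreg _ t h.choose_spec hne
  · rintro s ⟨hs, hgs⟩
    have h := mem_iUnion.1 hs
    simp only [g, dif_pos h] at hgs
    exact mem_iUnion.2 ⟨_, h.choose_spec, hgs⟩

theorem InNS.union {A B : Set T} (hA : InNS A) (hB : InNS B) : InNS (A ∪ B) := by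
  rw [union_eq_iUnion]
  exact inNS_iUnion fun b => by cases b <;> assumption

theorem inNS_of_countable_fibers {B : Set T} (f : T → T) (hreg : ∀ t ∈ B, t ≠ ⊥ → f t < t)
    (hfib : ∀ u, {s | s ∈ B ∧ f s = u}.Countable) : InNS B :=
  ⟨f, hreg, fun u => (hfib u).isSpecialSet⟩

end Special

theorem omega0_mul_add_natCast_inj {β γ : Ordinal} {j k : ℕ} :
    ω * β + j = ω * γ + k ↔ β = γ ∧ j = k := by
  refine ⟨fun h => ⟨?_, ?_⟩, fun h => by rw [h.1, h.2]⟩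
  · simpa [mul_add_div _ omega0_ne_zero, div_eq_zero_of_lt (natCast_lt_omega0 _)] using
      congrArg (· / ω) h
  · have h' := congrArg (· % ω) h
    simp only [mul_add_mod_self, mod_eq_of_lt (natCast_lt_omega0 _)] at h'
    exact_mod_cast h'

theorem countable_Iio_of_lt_omega1 {b : Ordinal} (hb : b < omega1) : (Iio b).Countable := by
  rw [← Cardinal.le_aleph0_iff_set_countable, Cardinal.mk_Iio_ordinal, Cardinal.lift_le_aleph0,
    ← Cardinal.lt_aleph_one_iff, ← Cardinal.lt_omega_iff_card_lt]
  exact hb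

theorem omega0_mul_succ_lt_omega1 {β : Ordinal} (hβ : β < omega1) : ω * Order.succ β < omega1 := by
  rw [Order.succ_eq_add_one]
  exact isPrincipal_mul_omega 1 omega0_lt_omega_one <|
    isPrincipal_add_omega 1 hβ (one_lt_omega0.trans omega0_lt_omega_one)

theorem countable_setOf_ht_lt {T : Type*} {ht : T → Ordinal} (hlev : CountableLevels ht)
    {b : Ordinal} (hb : b < omega1) : {s : T | ht s < b}.Countable := by
  have : {s : T | ht s < b} = ⋃ o ∈ Iio b, {s | ht s = o} := by ext; simp
  rw [this]
  exact (countable_Iio_of_lt_omega1 hb).biUnion fun o _ => hlev o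

section Tree

variable {T : Type*} [PartialOrder T] {ht : T → Ordinal}

theorem PredsChain.le_total_of_le (hchain : PredsChain T) {x y t : T} (hx : x ≤ t) (hy : y ≤ t) :
    x ≤ y ∨ y ≤ x := by
  rcases hx.eq_or_lt with rfl | hx
  · exact Or.inr hy
  rcases hy.eq_or_lt with rfl | hy
  · exact Or.inl hx.le
  rcases eq_or_ne x y with rfl | hne
  · exact Or.inl le_rfl
  · exact hchain t hx hy hne

theorem le_of_le_of_ht_le (hchain : PredsChain T) (hht : IsHeightFun ht) {x y t : T}
    (hx : x ≤ t) (hy : y ≤ t) (hxy : ht x ≤ ht y) : x ≤ y := by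
  rcases hchain.le_total_of_le hx hy with hxy' | hyx
  · exact hxy'
  rcases hyx.eq_or_lt with rfl | hyx
  · exact le_rfl
  · exact (hxy.not_gt (hht.1 _ _ hyx)).elim

theorem inNS_setOf_ht_lt_omega0_mul [OrderBot T] (hht : IsHeightFun ht)
    (hlt : ∀ t, ht t < omega1) (hlev : CountableLevels ht) :
    InNS {t : T | ht t < ω * ht t} := by
  have hpred : ∀ t : T, ∃ s, ht t < ω * ht t → s < t ∧ ht s = ht t / ω := fun t => by
    by_cases hbad : ht t < ω * ht t
    · have hdiv : ht t / ω < ht t :=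
        (mul_lt_mul_iff_right₀ omega0_pos).1 ((mul_div_le _ _).trans_lt hbad)
      obtain ⟨s, hst, hs⟩ := hht.2 t _ hdiv
      exact ⟨s, fun _ => ⟨hst, hs⟩⟩
    · exact ⟨t, fun h => (hbad h).elim⟩
  choose f hf using hpred
  refine inNS_of_countable_fibers f (fun t ht _ => (hf t ht).1) fun u => ?_
  refine (countable_setOf_ht_lt hlev (omega0_mul_succ_lt_omega1 (hlt u))).mono ?_
  rintro s ⟨hs, rfl⟩
  change ht s < ω * Order.succ (ht (f s))
  rw [(hf s hs).2]
  exact lt_mul_succ_div _ omega0_ne_zero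

def codeFamily (ht : T → Ordinal) (X : ℕ → Set T) : Set T :=
  {s | ∃ x ≤ s, ∃ j : ℕ, ht s = ω * ht x + j ∧ x ∈ X j}

def decodeSet (ht : T → Ordinal) (j : ℕ) (W : Set T) : Set T :=
  {x | ∃ s ∈ W, x ≤ s ∧ ht s = ω * ht x + j}

theorem decodeSet_subset_Iio {j : ℕ} {W : Set T} {t : T} (hW : W ⊆ Iio t) :
    decodeSet ht j W ⊆ Iio t := by
  rintro x ⟨s, hs, hxs, -⟩
  exact hxs.trans_lt (hW hs)

theorem decodeSet_codeFamily_inter_Iio (hchain : PredsChain T) (hht : IsHeightFun ht)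
    (X : ℕ → Set T) (j : ℕ) {t : T} (hgood : ω * ht t ≤ ht t) :
    decodeSet ht j (codeFamily ht X ∩ Iio t) = X j ∩ Iio t := by
  ext x
  constructor
  · rintro ⟨s, ⟨⟨x', hx's, j', hs', hx'⟩, hst⟩, hxs, hs⟩
    obtain ⟨hhtx, rfl⟩ := omega0_mul_add_natCast_inj.1 (hs'.symm.trans hs)
    obtain rfl : x' = x := le_antisymm (le_of_le_of_ht_le hchain hht hx's hxs hhtx.le)
      (le_of_le_of_ht_le hchain hht hxs hx's hhtx.ge)
    exact ⟨hx', hxs.trans_lt hst⟩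
  · rintro ⟨hx, hxt⟩
    have hcode : ω * ht x + j < ht t := calc
      ω * ht x + j < ω * ht x + ω := add_lt_add_right (natCast_lt_omega0 j) _
      _ = ω * Order.succ (ht x) := (mul_succ _ _).symm
      _ ≤ ω * ht t := mul_le_mul_right (Order.succ_le_of_lt (hht.1 _ _ hxt)) _
      _ ≤ ht t := hgood
    obtain ⟨s, hst, hs⟩ := hht.2 t _ hcode
    have hxs : x ≤ s := le_of_le_of_ht_le hchain hht hxt.le hst.le <| hs ▸
      (le_mul_right _ omega0_pos).trans le_self_add
    exact ⟨s, ⟨⟨x, hxs, j, hs, hx⟩, hst⟩, hxs, hs⟩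

variable [OrderBot T]

theorem diamondTree_of_diamondTreeMinus (hchain : PredsChain T) (hht : IsHeightFun ht)
    (hlt : ∀ t, ht t < omega1) (hlev : CountableLevels ht) (h : DiamondTreeMinus T) :
    DiamondTree T := by
  obtain ⟨𝒟, h𝒟, hguess⟩ := h
  have henum : ∀ t, ∃ e : ℕ → Set T, insert ∅ (𝒟 t) = range e := fun t =>
    ((h𝒟 t).2.insert ∅).exists_eq_range (insert_nonempty _ _)
  choose e he using henum
  have he_sub : ∀ t n, e t n ⊆ Iio t := fun t n => by
    rcases (he t ▸ mem_range_self n : e t n ∈ insert ∅ (𝒟 t)) with h0 | hmem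
    · exact h0 ▸ empty_subset _
    · exact (h𝒟 t).1 _ hmem
  by_contra hfails
  have hcounter : ∀ n : ℕ, ∃ X : Set T, InNS {t | X ∩ Iio t = decodeSet ht n (e t n)} :=
    fun n => by_contra fun hn => hfails
      ⟨fun t => decodeSet ht n (e t n), fun t => decodeSet_subset_Iio (he_sub t n),
        fun X hX => hn ⟨X, hX⟩⟩
  choose X hX using hcounter
  refine hguess (codeFamily ht X) <|
    ((inNS_setOf_ht_lt_omega0_mul hht hlt hlev).union (inNS_iUnion hX)).mono ?_
  intro t hYt
  by_cases hbad : ht t < ω * ht t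
  · exact Or.inl hbad
  obtain ⟨n, hn⟩ : codeFamily ht X ∩ Iio t ∈ range (e t) := he t ▸ mem_insert_of_mem _ hYt
  refine Or.inr (mem_iUnion.2 ⟨n, ?_⟩)
  change X n ∩ Iio t = decodeSet ht n (e t n)
  rw [hn, decodeSet_codeFamily_inter_Iio hchain hht X n (not_lt.1 hbad)]

end Tree

theorem DiamondTree.diamondTreeMinus {T : Type*} [PartialOrder T] [OrderBot T]
    (h : DiamondTree T) : DiamondTreeMinus T := by
  obtain ⟨D, hD, hguess⟩ := h
  refine ⟨fun t => {D t}, fun t => ⟨fun A hA => hA ▸ hD t, countable_singleton _⟩, ?_⟩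
  simpa only [mem_singleton_iff] using hguess

theorem stmt5_general {T : Type*} [PartialOrder T] [OrderBot T]
    (hchain : PredsChain T) (ht : T → Ordinal)
    (hht : IsHeightFun ht) (hΩ : HeightOmega1 ht) (hlev : CountableLevels ht) :
    DiamondTreeMinus T ↔ DiamondTree T :=
  ⟨diamondTree_of_diamondTreeMinus hchain hht hΩ.1 hlev, DiamondTree.diamondTreeMinus⟩

/-- If `T` is a nonspecial, well-pruned `ω₁`-tree then `◊_T⁻` holds
if and only if `◊_T` holds. -/
theorem stmt5 {T : Type*} [PartialOrder T] [OrderBot T]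
    (hchain : PredsChain T) (ht : T → Ordinal)
    (hht : IsHeightFun ht) (hΩ : HeightOmega1 ht) (hlev : CountableLevels ht)
    (hns : ¬ IsSpecialSet (Set.univ : Set T))
    (hwp : WellPruned ht) :
    DiamondTreeMinus T ↔ DiamondTree T :=
  stmt5_general hchain ht hht hΩ hlev
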